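/- Fix ξ = (ξ₁,ξ₂) ∈ 𝔻 and write |ξ|² = ξ₁²+ξ₂². Suppose h₁, h₂ : closure(𝔻) → ℝ are continuous on the closed unit disk, harmonic in 𝔻, and satisfy for all (x,y) ∈ ∂𝔻: h₁(x,y) = ((x−ξ₁)²−(y−ξ₂)²)/((x−ξ₁)²+(y−ξ₂)²)² and h₂(x,y) = 2(x−ξ₁)(y−ξ₂)/((x−ξ₁)²+(y−ξ₂)²)². Then at the point ξ: h₁(ξ) = (ξ₁²−ξ₂²)/(1−|ξ|²)², h₂(ξ) = 2ξ₁ξ₂/(1−|ξ|²)², ∂h₁/∂x(ξ) = ∂h₂/∂y(ξ) = 2ξ₁/(1−|ξ|²)³, ∂h₁/∂y(ξ) = −∂h₂/∂x(ξ) = −2ξ₂/(1−|ξ|²)³, ∂²h₁/∂x²(ξ) = ∂²h₂/∂x∂y(ξ) = 2(1+2|ξ|²)/(1−|ξ|²)⁴, ∂²h₁/∂y²(ξ) = −2(1+2|ξ|²)/(1−|ξ|²)⁴, and ∂²h₁/∂x∂y(ξ) = ∂²h₂/∂x²(ξ) = ∂²h₂/∂y²(ξ) = 0. -/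

import Mathlib

/-!
On the unit circle `conj z = z⁻¹`, so `1 - conj ξ * z = z * conj (z - ξ)` there and the boundary
data `h₁ + i h₂ = 1 / conj (z - ξ) ^ 2` coincide with the holomorphic function
`z ^ 2 / (1 - conj ξ * z) ^ 2`, which has no pole on the closed disk. By the Poisson formula a
harmonic function continuous on the closed disk is determined by its boundary values, so `h₁` and
`h₂` are the real and imaginary parts of this function near `ξ`, and their partial derivatives are
read off from its complex derivatives through the Cauchy–Riemann equations.
-/

noncomputable section

open Metric

/-- Partial derivative in the `x` direction of a scalar function, identifying `ℝ²` with `ℂ`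
via `z = x + iy`. -/
def px (f : ℂ → ℝ) (z : ℂ) : ℝ := fderiv ℝ f z 1

/-- Partial derivative in the `y` direction. -/
def py (f : ℂ → ℝ) (z : ℂ) : ℝ := fderiv ℝ f z Complex.I

/-- `f` is harmonic on `s`: it is `C²` there and its Laplacian vanishes on `s`. -/
def HarmonicOnSet (f : ℂ → ℝ) (s : Set ℂ) : Prop :=
  ContDiffOn ℝ 2 f s ∧ ∀ z ∈ s, px (px f) z + py (py f) z = 0


open InnerProductSpace Laplacian Filter Topology Complex ComplexConjugate Set

theorem laplacian_eq_px_px_add_py_py {f : ℂ → ℝ} {z : ℂ} (hf : ContDiffAt ℝ 2 f z) :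
    Δ f z = px (px f) z + py (py f) z := by
  have hd : DifferentiableAt ℝ (fderiv ℝ f) z :=
    (hf.fderiv_right (m := 1) (by norm_num)).differentiableAt one_ne_zero
  change _ = fderiv ℝ (fun w => fderiv ℝ f w 1) z 1 + fderiv ℝ (fun w => fderiv ℝ f w I) z I
  simp only [laplacian_eq_iteratedFDeriv_complexPlane, iteratedFDeriv_two_apply]
  rw [fderiv_clm_apply hd (differentiableAt_const _), fderiv_clm_apply hd (differentiableAt_const _)]
  simp

theorem HarmonicOnSet.harmonicOnNhd {f : ℂ → ℝ} {s : Set ℂ} (hs : IsOpen s)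
    (h : HarmonicOnSet f s) : HarmonicOnNhd f s := fun z hz => by
  refine ⟨h.1.contDiffAt (hs.mem_nhds hz), ?_⟩
  filter_upwards [hs.mem_nhds hz] with w hw
  rw [laplacian_eq_px_px_add_py_py (h.1.contDiffAt (hs.mem_nhds hw)), h.2 w hw]
  rfl

theorem InnerProductSpace.HarmonicContOnCl.eqOn_ball_of_eqOn_sphere {f g : ℂ → ℝ} {c : ℂ}
    {R : ℝ} (hf : HarmonicContOnCl f (ball c R)) (hg : HarmonicContOnCl g (ball c R))
    (hfg : EqOn f g (sphere c R)) : EqOn f g (ball c R) := fun w hw => by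
  rw [← hf.circleAverage_poissonKernel_smul hw, ← hg.circleAverage_poissonKernel_smul hw]
  refine Real.circleAverage_congr_sphere fun z hz => ?_
  rw [abs_of_pos (pos_of_mem_ball hw)] at hz
  simp [hfg hz]

theorem AnalyticOnNhd.harmonicContOnCl_re {f : ℂ → ℂ} {c : ℂ} {r : ℝ}
    (hf : AnalyticOnNhd ℂ f (closedBall c r)) :
    HarmonicContOnCl (fun z => (f z).re) (ball c r) :=
  .mk_ball (fun z hz => (hf z (ball_subset_closedBall hz)).harmonicAt_re)
    (continuous_re.comp_continuousOn hf.continuousOn)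

theorem AnalyticOnNhd.harmonicContOnCl_im {f : ℂ → ℂ} {c : ℂ} {r : ℝ}
    (hf : AnalyticOnNhd ℂ f (closedBall c r)) :
    HarmonicContOnCl (fun z => (f z).im) (ball c r) :=
  .mk_ball (fun z hz => (hf z (ball_subset_closedBall hz)).harmonicAt_im)
    (continuous_im.comp_continuousOn hf.continuousOn)

section CauchyRiemann

variable {u : ℂ → ℝ} {F G : ℂ → ℂ} {F' G' z : ℂ}

theorem fderiv_apply_of_eventuallyEq_re (hu : u =ᶠ[𝓝 z] fun x => (F x).re)
    (hF : HasDerivAt F F' z) (v : ℂ) : fderiv ℝ u z v = (F' * v).re := by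
  rw [hu.fderiv_eq, show (fun x => (F x).re) = reCLM ∘ F from rfl,
    (reCLM.hasFDerivAt.comp z (hF.hasFDerivAt.restrictScalars ℝ)).fderiv]
  simp [mul_comm]

theorem fderiv_apply_of_eventuallyEq_im (hu : u =ᶠ[𝓝 z] fun x => (F x).im)
    (hF : HasDerivAt F F' z) (v : ℂ) : fderiv ℝ u z v = (F' * v).im := by
  rw [hu.fderiv_eq, show (fun x => (F x).im) = imCLM ∘ F from rfl,
    (imCLM.hasFDerivAt.comp z (hF.hasFDerivAt.restrictScalars ℝ)).fderiv]
  simp [mul_comm]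

theorem fderiv_fderiv_apply_of_eventuallyEq_re (hu : u =ᶠ[𝓝 z] fun x => (F x).re)
    (hF : ∀ᶠ w in 𝓝 z, HasDerivAt F (G w) w) (hG : HasDerivAt G G' z) (v v' : ℂ) :
    fderiv ℝ (fun w => fderiv ℝ u w v) z v' = (G' * v * v').re := by
  refine fderiv_apply_of_eventuallyEq_re ?_ (hG.mul_const v) v'
  filter_upwards [hu.eventuallyEq_nhds, hF] with w huw hFw
    using fderiv_apply_of_eventuallyEq_re huw hFw v

theorem fderiv_fderiv_apply_of_eventuallyEq_im (hu : u =ᶠ[𝓝 z] fun x => (F x).im)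
    (hF : ∀ᶠ w in 𝓝 z, HasDerivAt F (G w) w) (hG : HasDerivAt G G' z) (v v' : ℂ) :
    fderiv ℝ (fun w => fderiv ℝ u w v) z v' = (G' * v * v').im := by
  refine fderiv_apply_of_eventuallyEq_im ?_ (hG.mul_const v) v'
  filter_upwards [hu.eventuallyEq_nhds, hF] with w huw hFw
    using fderiv_apply_of_eventuallyEq_im huw hFw v

end CauchyRiemann

def boundaryExtension (ξ z : ℂ) : ℂ := z ^ 2 / (1 - conj ξ * z) ^ 2

section boundaryExtension

variable {ξ z : ℂ}

theorem one_sub_conj_mul_ne_zero (hξ : ‖ξ‖ < 1) (hz : ‖z‖ ≤ 1) : 1 - conj ξ * z ≠ 0 := by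
  intro h
  have : ‖conj ξ * z‖ = 1 := by rw [← sub_eq_zero.mp h, norm_one]
  rw [norm_mul, RCLike.norm_conj] at this
  nlinarith [norm_nonneg ξ, norm_nonneg z]

theorem analyticOnNhd_boundaryExtension (hξ : ‖ξ‖ < 1) :
    AnalyticOnNhd ℂ (boundaryExtension ξ) (closedBall 0 1) := fun z hz => by
  have hne := one_sub_conj_mul_ne_zero hξ (mem_closedBall_zero_iff.mp hz)
  unfold boundaryExtension
  fun_prop (disch := exact pow_ne_zero 2 hne)

theorem hasDerivAt_boundaryExtension (hz : 1 - conj ξ * z ≠ 0) :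
    HasDerivAt (boundaryExtension ξ) (2 * z / (1 - conj ξ * z) ^ 3) z := by
  have hd : HasDerivAt (fun w => 1 - conj ξ * w) (-conj ξ) z := by
    simpa using ((hasDerivAt_id z).const_mul (conj ξ)).const_sub 1
  refine ((hasDerivAt_pow 2 z).div (hd.pow 2) (pow_ne_zero 2 hz)).congr_deriv ?_
  simp only [Pi.pow_apply]
  field_simp
  ring

theorem eventually_hasDerivAt_boundaryExtension (hz : 1 - conj ξ * z ≠ 0) :
    ∀ᶠ w in 𝓝 z, HasDerivAt (boundaryExtension ξ) (2 * w / (1 - conj ξ * w) ^ 3) w := by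
  have hcont : Continuous fun w => 1 - conj ξ * w := by fun_prop
  filter_upwards [hcont.continuousAt.eventually_ne hz] with w hw
    using hasDerivAt_boundaryExtension hw

theorem hasDerivAt_deriv_boundaryExtension (hz : 1 - conj ξ * z ≠ 0) :
    HasDerivAt (fun w => 2 * w / (1 - conj ξ * w) ^ 3)
      ((2 + 4 * conj ξ * z) / (1 - conj ξ * z) ^ 4) z := by
  have hd : HasDerivAt (fun w => 1 - conj ξ * w) (-conj ξ) z := by
    simpa using ((hasDerivAt_id z).const_mul (conj ξ)).const_sub 1
  refine (((hasDerivAt_id z).const_mul 2).div (hd.pow 3) (pow_ne_zero 3 hz)).congr_deriv ?_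
  simp only [Pi.pow_apply, id]
  field_simp
  ring

theorem boundaryExtension_eq_of_norm_eq_one (hz : ‖z‖ = 1) :
    boundaryExtension ξ z = (z - ξ) ^ 2 / (normSq (z - ξ) : ℂ) ^ 2 := by
  have hz0 : z ≠ 0 := by rintro rfl; simp at hz
  have hden : 1 - conj ξ * z = z * conj (z - ξ) := by
    rw [map_sub, mul_sub, mul_conj, ← Complex.sq_norm, hz]
    push_cast; ring
  rw [boundaryExtension, hden, ← mul_conj, mul_pow, mul_pow,
    div_mul_cancel_left₀ (pow_ne_zero 2 hz0)]
  rcases eq_or_ne (z - ξ) 0 with h | h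
  · simp [h]
  · rw [div_mul_cancel_left₀ (pow_ne_zero 2 h)]

theorem re_boundaryExtension_of_norm_eq_one (hz : ‖z‖ = 1) :
    (boundaryExtension ξ z).re = ((z.re - ξ.re) ^ 2 - (z.im - ξ.im) ^ 2) /
      ((z.re - ξ.re) ^ 2 + (z.im - ξ.im) ^ 2) ^ 2 := by
  rw [boundaryExtension_eq_of_norm_eq_one hz, ← ofReal_pow, div_ofReal_re, normSq_apply]
  simp only [sq, mul_re, sub_re, sub_im]

theorem im_boundaryExtension_of_norm_eq_one (hz : ‖z‖ = 1) :
    (boundaryExtension ξ z).im = 2 * (z.re - ξ.re) * (z.im - ξ.im) /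
      ((z.re - ξ.re) ^ 2 + (z.im - ξ.im) ^ 2) ^ 2 := by
  rw [boundaryExtension_eq_of_norm_eq_one hz, ← ofReal_pow, div_ofReal_im, normSq_apply]
  simp only [sq, mul_im, sub_re, sub_im]
  ring

theorem low_order_of_eventuallyEq_boundaryExtension (hξ : ‖ξ‖ < 1) {h1 h2 : ℂ → ℝ}
    (e1 : h1 =ᶠ[𝓝 ξ] fun z => (boundaryExtension ξ z).re)
    (e2 : h2 =ᶠ[𝓝 ξ] fun z => (boundaryExtension ξ z).im) :
    h1 ξ = (ξ.re ^ 2 - ξ.im ^ 2) / (1 - (ξ.re ^ 2 + ξ.im ^ 2)) ^ 2 ∧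
    h2 ξ = 2 * ξ.re * ξ.im / (1 - (ξ.re ^ 2 + ξ.im ^ 2)) ^ 2 ∧
    px h1 ξ = 2 * ξ.re / (1 - (ξ.re ^ 2 + ξ.im ^ 2)) ^ 3 ∧
    py h2 ξ = 2 * ξ.re / (1 - (ξ.re ^ 2 + ξ.im ^ 2)) ^ 3 ∧
    py h1 ξ = -(2 * ξ.im) / (1 - (ξ.re ^ 2 + ξ.im ^ 2)) ^ 3 ∧
    px h2 ξ = 2 * ξ.im / (1 - (ξ.re ^ 2 + ξ.im ^ 2)) ^ 3 ∧
    px (px h1) ξ = 2 * (1 + 2 * (ξ.re ^ 2 + ξ.im ^ 2)) / (1 - (ξ.re ^ 2 + ξ.im ^ 2)) ^ 4 ∧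
    px (py h2) ξ = 2 * (1 + 2 * (ξ.re ^ 2 + ξ.im ^ 2)) / (1 - (ξ.re ^ 2 + ξ.im ^ 2)) ^ 4 ∧
    py (py h1) ξ = -(2 * (1 + 2 * (ξ.re ^ 2 + ξ.im ^ 2))) / (1 - (ξ.re ^ 2 + ξ.im ^ 2)) ^ 4 ∧
    px (py h1) ξ = 0 ∧ px (px h2) ξ = 0 ∧ py (py h2) ξ = 0 := by
  have hne := one_sub_conj_mul_ne_zero hξ hξ.le
  have hF := eventually_hasDerivAt_boundaryExtension hne
  have hG := hasDerivAt_deriv_boundaryExtension hne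
  have hs : conj ξ * ξ = ((ξ.re ^ 2 + ξ.im ^ 2 : ℝ) : ℂ) := by
    rw [mul_comm, mul_conj, normSq_apply]; push_cast; ring
  have hs1 : 1 - conj ξ * ξ = ((1 - (ξ.re ^ 2 + ξ.im ^ 2) : ℝ) : ℂ) := by
    rw [hs]; push_cast; ring
  have hs2 : 2 + 4 * conj ξ * ξ = ((2 * (1 + 2 * (ξ.re ^ 2 + ξ.im ^ 2)) : ℝ) : ℂ) := by
    rw [mul_assoc, hs]; push_cast; ring
  unfold px py
  simp only [e1.eq_of_nhds, e2.eq_of_nhds, fderiv_apply_of_eventuallyEq_re e1 hF.self_of_nhds,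
    fderiv_apply_of_eventuallyEq_im e2 hF.self_of_nhds,
    fderiv_fderiv_apply_of_eventuallyEq_re e1 hF hG,
    fderiv_fderiv_apply_of_eventuallyEq_im e2 hF hG,
    boundaryExtension, hs1, hs2, ← ofReal_pow, ← ofReal_div]
  refine ⟨?_, ?_, ?_, ?_, ?_, ?_, ?_, ?_, ?_, ?_, ?_, ?_⟩ <;>
    simp [sq ξ, neg_div, -ofReal_div, -ofReal_pow] <;> ring

end boundaryExtension

/-- Values and derivatives up to second order at `ξ` of the harmonic extension of the degree-2
boundary data `h^{(1)}`. -/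
theorem robin_function_h1_low_order (ξ : ℂ) (hξ : ξ ∈ ball (0 : ℂ) 1)
    (h1 h2 : ℂ → ℝ)
    (hc1 : ContinuousOn h1 (closedBall (0 : ℂ) 1))
    (hc2 : ContinuousOn h2 (closedBall (0 : ℂ) 1))
    (hh1 : HarmonicOnSet h1 (ball (0 : ℂ) 1))
    (hh2 : HarmonicOnSet h2 (ball (0 : ℂ) 1))
    (hb1 : ∀ z ∈ sphere (0 : ℂ) 1,
      h1 z = ((z.re - ξ.re) ^ 2 - (z.im - ξ.im) ^ 2) /
        ((z.re - ξ.re) ^ 2 + (z.im - ξ.im) ^ 2) ^ 2)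
    (hb2 : ∀ z ∈ sphere (0 : ℂ) 1,
      h2 z = 2 * (z.re - ξ.re) * (z.im - ξ.im) /
        ((z.re - ξ.re) ^ 2 + (z.im - ξ.im) ^ 2) ^ 2) :
    h1 ξ = (ξ.re ^ 2 - ξ.im ^ 2) / (1 - (ξ.re ^ 2 + ξ.im ^ 2)) ^ 2 ∧
    h2 ξ = 2 * ξ.re * ξ.im / (1 - (ξ.re ^ 2 + ξ.im ^ 2)) ^ 2 ∧
    px h1 ξ = 2 * ξ.re / (1 - (ξ.re ^ 2 + ξ.im ^ 2)) ^ 3 ∧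
    py h2 ξ = 2 * ξ.re / (1 - (ξ.re ^ 2 + ξ.im ^ 2)) ^ 3 ∧
    py h1 ξ = -(2 * ξ.im) / (1 - (ξ.re ^ 2 + ξ.im ^ 2)) ^ 3 ∧
    px h2 ξ = 2 * ξ.im / (1 - (ξ.re ^ 2 + ξ.im ^ 2)) ^ 3 ∧
    px (px h1) ξ = 2 * (1 + 2 * (ξ.re ^ 2 + ξ.im ^ 2)) / (1 - (ξ.re ^ 2 + ξ.im ^ 2)) ^ 4 ∧
    px (py h2) ξ = 2 * (1 + 2 * (ξ.re ^ 2 + ξ.im ^ 2)) / (1 - (ξ.re ^ 2 + ξ.im ^ 2)) ^ 4 ∧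
    py (py h1) ξ = -(2 * (1 + 2 * (ξ.re ^ 2 + ξ.im ^ 2))) / (1 - (ξ.re ^ 2 + ξ.im ^ 2)) ^ 4 ∧
    px (py h1) ξ = 0 ∧ px (px h2) ξ = 0 ∧ py (py h2) ξ = 0 := by
  have hξ' : ‖ξ‖ < 1 := mem_ball_zero_iff.mp hξ
  have hF := analyticOnNhd_boundaryExtension hξ'
  have e1 : EqOn h1 (fun z => (boundaryExtension ξ z).re) (ball 0 1) :=
    (HarmonicContOnCl.mk_ball (hh1.harmonicOnNhd isOpen_ball) hc1).eqOn_ball_of_eqOn_sphere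
      hF.harmonicContOnCl_re fun z hz => by
        rw [hb1 z hz, re_boundaryExtension_of_norm_eq_one (mem_sphere_zero_iff_norm.mp hz)]
  have e2 : EqOn h2 (fun z => (boundaryExtension ξ z).im) (ball 0 1) :=
    (HarmonicContOnCl.mk_ball (hh2.harmonicOnNhd isOpen_ball) hc2).eqOn_ball_of_eqOn_sphere
      hF.harmonicContOnCl_im fun z hz => by
        rw [hb2 z hz, im_boundaryExtension_of_norm_eq_one (mem_sphere_zero_iff_norm.mp hz)]
  exact low_order_of_eventuallyEq_boundaryExtension hξ'
    (e1.eventuallyEq_of_mem (isOpen_ball.mem_nhds hξ))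
    (e2.eventuallyEq_of_mem (isOpen_ball.mem_nhds hξ))
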